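/- For all i, j ∈ {1,…,K}: Σ_{k,ℓ=1}^n c(λ_k,λ_ℓ) ⟨v_k, Pφ_i v_ℓ⟩ ⟨v_ℓ, Pφ_j v_k⟩ = Tr[[[Ψ_φ†(H_j), G(θ)], Ψ_φ†(H_i)] ρ(θ)]; that is, the Kubo–Mori information matrix elements of the evolved quantum Boltzmann machine with respect to the φ parameters are I^KM_{ij}(φ) = ⟨[[Ψ_φ†(H_j),G(θ)],Ψ_φ†(H_i)]⟩_{ρ(θ)}. -/

import Mathlib

open MeasureTheory Matrix

noncomputable section

attribute [local instance] Matrix.normedAddCommGroup Matrix.normedSpace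

/-- Square complex matrices. -/
abbrev Mat (n : ℕ) := Matrix (Fin n) (Fin n) ℂ

/-- The parameterized Hamiltonian `G(θ) = ∑ j, θ j • G j`. -/
def Gm {n J : ℕ} (G : Fin J → Mat n) (θ : Fin J → ℝ) : Mat n := ∑ j, (θ j : ℂ) • G j

/-- The parameterized Hamiltonian `H(φ) = ∑ k, φ k • H k`. -/
def Hm {n K : ℕ} (H : Fin K → Mat n) (φ : Fin K → ℝ) : Mat n := ∑ k, (φ k : ℂ) • H k

/-- The partition function `Z(θ) = Tr[exp (−G(θ))]` (a positive real). -/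
def Zpf {n J : ℕ} (G : Fin J → Mat n) (θ : Fin J → ℝ) : ℝ :=
  (Matrix.trace (NormedSpace.exp (-(Gm G θ)))).re

/-- The quantum Boltzmann machine `ρ(θ) = exp(−G(θ))/Z(θ)`. -/
def qbm {n J : ℕ} (G : Fin J → Mat n) (θ : Fin J → ℝ) : Mat n :=
  ((Zpf G θ : ℂ))⁻¹ • NormedSpace.exp (-(Gm G θ))

/-- The unitary `exp(−i H(φ))`. -/
def uH {n K : ℕ} (H : Fin K → Mat n) (φ : Fin K → ℝ) : Mat n :=
  NormedSpace.exp (-(Complex.I • Hm H φ))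

/-- The unitary `exp(i H(φ))`. -/
def uH' {n K : ℕ} (H : Fin K → Mat n) (φ : Fin K → ℝ) : Mat n :=
  NormedSpace.exp (Complex.I • Hm H φ)

/-- The evolved quantum Boltzmann machine `ω(θ,φ) = exp(−iH(φ)) ρ(θ) exp(iH(φ))`. -/
def eqbm {n J K : ℕ} (G : Fin J → Mat n) (H : Fin K → Mat n)
    (θ : Fin J → ℝ) (φ : Fin K → ℝ) : Mat n :=
  uH H φ * qbm G θ * uH' H φ

/-- The high-peak-tent probability density `p(t) = (2/π) ln |coth (π t / 2)|`. -/
def hpt (t : ℝ) : ℝ :=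
  (2 / Real.pi) * Real.log |Real.cosh (Real.pi * t / 2) / Real.sinh (Real.pi * t / 2)|

/-- The channel `Φ_θ(X) = ∫ℝ p(t) exp(−iG(θ)t) X exp(iG(θ)t) dt`. -/
def chanΦ {n J : ℕ} (G : Fin J → Mat n) (θ : Fin J → ℝ) (X : Mat n) : Mat n :=
  ∫ t : ℝ, hpt t •
    (NormedSpace.exp ((-(Complex.I * (t : ℂ))) • Gm G θ) * X *
      NormedSpace.exp ((Complex.I * (t : ℂ)) • Gm G θ))

/-- The channel `Ψ_φ(X) = ∫₀¹ exp(−iH(φ)t) X exp(iH(φ)t) dt`. -/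
def chanΨ {n K : ℕ} (H : Fin K → Mat n) (φ : Fin K → ℝ) (X : Mat n) : Mat n :=
  ∫ t in (0:ℝ)..1,
    (NormedSpace.exp ((-(Complex.I * (t : ℂ))) • Hm H φ) * X *
      NormedSpace.exp ((Complex.I * (t : ℂ)) • Hm H φ))

/-- The adjoint channel `Ψ_φ†(X) = ∫₀¹ exp(iH(φ)t) X exp(−iH(φ)t) dt`. -/
def chanΨdag {n K : ℕ} (H : Fin K → Mat n) (φ : Fin K → ℝ) (X : Mat n) : Mat n :=
  ∫ t in (0:ℝ)..1,
    (NormedSpace.exp ((Complex.I * (t : ℂ)) • Hm H φ) * X *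
      NormedSpace.exp ((-(Complex.I * (t : ℂ))) • Hm H φ))

/-- `⟨x, y⟩ = ∑ m, conj (x m) * y m`. -/
def dotc {n : ℕ} (x y : Fin n → ℂ) : ℂ := ∑ m, (starRingEnd ℂ) (x m) * y m

/-- The eigenvalues `λ_k = exp(−μ_k)/(∑_m exp(−μ_m))` of `ρ(θ)`. -/
def lamd {n : ℕ} (μ : Fin n → ℝ) (k : Fin n) : ℝ := Real.exp (-μ k) / ∑ m, Real.exp (-μ m)

/-- The partial derivative of `ω(θ,φ)` with respect to `θ_j`:
`Pθ_j = −(1/2){exp(−iH(φ)) Φ_θ(G_j) exp(iH(φ)), ω(θ,φ)} + ⟨G_j⟩_{ρ(θ)} ω(θ,φ)`. -/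
def Pθ {n J K : ℕ} (G : Fin J → Mat n) (H : Fin K → Mat n)
    (θ : Fin J → ℝ) (φ : Fin K → ℝ) (j : Fin J) : Mat n :=
  -(1 / 2 : ℂ) •
      (uH H φ * chanΦ G θ (G j) * uH' H φ * eqbm G H θ φ
        + eqbm G H θ φ * (uH H φ * chanΦ G θ (G j) * uH' H φ))
    + Matrix.trace (G j * qbm G θ) • eqbm G H θ φ

/-- The partial derivative of `ω(θ,φ)` with respect to `φ_k`: `Pφ_k = i[ω(θ,φ), Ψ_φ(H_k)]`. -/
def Pφ {n J K : ℕ} (G : Fin J → Mat n) (H : Fin K → Mat n)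
    (θ : Fin J → ℝ) (φ : Fin K → ℝ) (k : Fin K) : Mat n :=
  Complex.I • (eqbm G H θ φ * chanΨ H φ (H k) - chanΨ H φ (H k) * eqbm G H θ φ)

/-- The coefficient `c(x,y) = (ln x − ln y)/(x − y)` for `x ≠ y`, and `c(x,x) = 1/x`. -/
def cKM (x y : ℝ) : ℝ := if x = y then 1 / x else (Real.log x - Real.log y) / (x - y)


/-!
Conjugating by the unitary `W = exp(−iH(φ)) V`, where `V` has the eigenvectors `u_k` as columns,
turns `Pφ_i` into `i[Λ, A_i]` with `Λ = diag λ` and `A_i = V† Ψ_φ†(H_i) V`: indeed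
`exp(iH) Ψ_φ(X) exp(−iH) = Ψ_φ†(X)` by the substitution `t ↦ 1 − t`. In this basis the
Kubo–Mori sum is `∑ c(λ_k, λ_l) (λ_k − λ_l)² (A_i)_{kl} (A_j)_{lk}`, and
`c(λ_k, λ_l) (λ_k − λ_l) = ln λ_k − ln λ_l = μ_l − μ_k` turns it into
`∑ (μ_l − μ_k) (λ_k − λ_l) (A_i)_{kl} (A_j)_{lk}`, which is the trace of `[[A_j, D], A_i] Λ`
for `D = diag μ`: the right-hand side written in the eigenbasis of `G(θ)`.
-/

lemma cKM_mul_sub_sq (x y : ℝ) :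
    cKM x y * (x - y) ^ 2 = (Real.log x - Real.log y) * (x - y) := by
  unfold cKM
  split_ifs with h
  · simp [h]
  · field_simp [sub_ne_zero.mpr h]

lemma log_lamd_sub_log_lamd {n : ℕ} (μ : Fin n → ℝ) (k l : Fin n) :
    Real.log (lamd μ k) - Real.log (lamd μ l) = μ l - μ k := by
  have hZ : ∑ m, Real.exp (-μ m) ≠ 0 :=
    (Finset.sum_pos (fun m _ => Real.exp_pos _) ⟨k, Finset.mem_univ k⟩).ne'
  simp only [lamd, Real.log_div (Real.exp_ne_zero _) hZ, Real.log_exp]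
  ring

lemma cKM_lamd_mul_sub_sq {n : ℕ} (μ : Fin n → ℝ) (k l : Fin n) :
    cKM (lamd μ k) (lamd μ l) * (lamd μ k - lamd μ l) ^ 2
      = (μ l - μ k) * (lamd μ k - lamd μ l) := by
  rw [cKM_mul_sub_sq, log_lamd_sub_log_lamd]

lemma mul_intervalIntegral_mul {ι : Type*} [Fintype ι] (M N : Matrix ι ι ℂ)
    {f : ℝ → Matrix ι ι ℂ} (hf : Continuous f) (a b : ℝ) :
    M * (∫ t in a..b, f t) * N = ∫ t in a..b, M * f t * N :=
  ((LinearMap.mulRight ℂ N).comp (LinearMap.mulLeft ℂ M)).toContinuousLinearMap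
    |>.intervalIntegral_comp_comm (hf.intervalIntegrable a b) |>.symm

section SquareMatrix

variable {ι : Type*} [Fintype ι] [DecidableEq ι]

lemma diagonal_mul_sub_mul_diagonal_apply (d : ι → ℂ) (A : Matrix ι ι ℂ) (k l : ι) :
    (diagonal d * A - A * diagonal d) k l = (d k - d l) * A k l := by
  simp only [Matrix.sub_apply, diagonal_mul, mul_diagonal]
  ring

theorem sum_mul_commutator_diagonal_eq_trace (lam mu : ι → ℂ) (c : ι → ι → ℂ)
    (hc : ∀ k l, c k l * (lam k - lam l) ^ 2 = (mu l - mu k) * (lam k - lam l))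
    (A B : Matrix ι ι ℂ) :
    ∑ k, ∑ l, c k l * (Complex.I • (diagonal lam * A - A * diagonal lam)) k l *
        (Complex.I • (diagonal lam * B - B * diagonal lam)) l k
      = trace (((B * diagonal mu - diagonal mu * B) * A - A * (B * diagonal mu - diagonal mu * B))
          * diagonal lam) := by
  have hC : ∀ k l, (B * diagonal mu - diagonal mu * B) k l = (mu l - mu k) * B k l := by
    intro k l
    simp only [Matrix.sub_apply, diagonal_mul, mul_diagonal]
    ring
  have hrhs : trace (((B * diagonal mu - diagonal mu * B) * A
        - A * (B * diagonal mu - diagonal mu * B)) * diagonal lam)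
      = ∑ k, ∑ l, (mu l - mu k) * B k l * A l k * lam k
        + ∑ k, ∑ l, (mu l - mu k) * A k l * B l k * lam k := by
    simp only [trace, diag, mul_diagonal]
    simp only [Matrix.sub_apply, mul_apply, hC, ← Finset.sum_sub_distrib,
      ← Finset.sum_add_distrib, Finset.sum_mul]
    refine Finset.sum_congr rfl fun k _ => Finset.sum_congr rfl fun l _ => ?_
    ring
  rw [hrhs, Finset.sum_comm (f := fun k l => (mu l - mu k) * B k l * A l k * lam k),
    ← Finset.sum_add_distrib]
  refine Finset.sum_congr rfl fun k _ => ?_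
  rw [← Finset.sum_add_distrib]
  refine Finset.sum_congr rfl fun l _ => ?_
  simp only [Matrix.smul_apply, smul_eq_mul, diagonal_mul_sub_mul_diagonal_apply]
  linear_combination (A k l * B l k) * hc k l
    + c k l * (lam k - lam l) * (lam l - lam k) * A k l * B l k * Complex.I_mul_I

lemma of_transpose_mem_unitary {u : ι → ι → ℂ}
    (hu : ∀ k l, star (u k) ⬝ᵥ u l = if k = l then 1 else 0) :
    (of u)ᵀ ∈ unitary (Matrix ι ι ℂ) := by
  refine Matrix.mem_unitaryGroup_iff'.mpr ?_
  ext k l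
  simpa [mul_apply, one_apply, dotProduct] using hu k l

lemma eq_conj_diagonal_of_mulVec_eq {A : Matrix ι ι ℂ} {u : ι → ι → ℂ} {μ : ι → ℂ}
    (hu : (of u)ᵀ ∈ unitary (Matrix ι ι ℂ)) (h : ∀ k, A *ᵥ u k = μ k • u k) :
    A = (of u)ᵀ * diagonal μ * star (of u)ᵀ := by
  have hAV : A * (of u)ᵀ = (of u)ᵀ * diagonal μ := by
    ext m k
    rw [mul_diagonal]
    simpa [mulVec, dotProduct, mul_apply, mul_comm] using congrFun (h k) m
  rw [← hAV, Matrix.mul_assoc, Unitary.mul_star_self_of_mem hu, Matrix.mul_one]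

lemma star_mul_conj_mul {U : Matrix ι ι ℂ} (hU : U ∈ unitary (Matrix ι ι ℂ))
    (M : Matrix ι ι ℂ) : star U * (U * M * star U) * U = M := by
  simp only [Matrix.mul_assoc, Unitary.star_mul_self_of_mem hU, Matrix.mul_one,
    ← Matrix.mul_assoc (star U), Matrix.one_mul]

lemma trace_conj_of_mem_unitary {U : Matrix ι ι ℂ} (hU : U ∈ unitary (Matrix ι ι ℂ))
    (M : Matrix ι ι ℂ) : trace (U * M * star U) = trace M := by
  rw [trace_mul_cycle, Unitary.star_mul_self_of_mem hU, Matrix.one_mul]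

lemma exp_conj_of_mem_unitary {U : Matrix ι ι ℂ} (hU : U ∈ unitary (Matrix ι ι ℂ))
    (M : Matrix ι ι ℂ) :
    NormedSpace.exp (U * M * star U) = U * NormedSpace.exp M * star U :=
  Matrix.exp_units_conj (Unitary.toUnits ⟨U, hU⟩) M

lemma star_mul_smul_commutator_mul {U : Matrix ι ι ℂ} (hU : U ∈ unitary (Matrix ι ι ℂ))
    (s : ℂ) (X Y : Matrix ι ι ℂ) :
    star U * (s • (X * Y - Y * X)) * U
      = s • ((star U * X * U) * (star U * Y * U) - (star U * Y * U) * (star U * X * U)) := by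
  simp only [← Unitary.conjStarAlgAut_star_apply (S := ℂ) ⟨U, hU⟩]
  rw [map_smul, map_sub, map_mul, map_mul]

lemma continuous_exp_mul_ofReal_smul (c : ℂ) (B : Matrix ι ι ℂ) :
    Continuous fun t : ℝ => NormedSpace.exp ((c * t) • B) := by
  open scoped Norms.Operator in
  exact NormedSpace.exp_continuous.comp
    ((continuous_const.mul Complex.continuous_ofReal).smul continuous_const)

lemma exp_smul_add_smul (B : Matrix ι ι ℂ) (c d : ℂ) :
    NormedSpace.exp ((c + d) • B) = NormedSpace.exp (c • B) * NormedSpace.exp (d • B) := by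
  rw [add_smul]
  exact Matrix.exp_add_of_commute _ _ (((Commute.refl B).smul_left c).smul_right d)

end SquareMatrix

lemma dotc_eq_star_dotProduct {n : ℕ} (x y : Fin n → ℂ) : dotc x y = star x ⬝ᵥ y := rfl

lemma dotc_mulVec_mulVec {n : ℕ} (W X : Mat n) (x y : Fin n → ℂ) :
    dotc (W *ᵥ x) (X *ᵥ (W *ᵥ y)) = dotc x ((star W * X * W) *ᵥ y) := by
  simp only [dotc_eq_star_dotProduct, star_mulVec, dotProduct_mulVec, vecMul_vecMul,
    mulVec_mulVec, Matrix.mul_assoc, star_eq_conjTranspose]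

lemma dotc_mulVec_eq_conj_apply {n : ℕ} (u : Fin n → Fin n → ℂ) (M : Mat n) (k l : Fin n) :
    dotc (u k) (M *ᵥ u l) = (star (of u)ᵀ * M * (of u)ᵀ) k l := by
  simp only [dotc, mulVec, dotProduct, mul_apply, star_apply, transpose_apply, of_apply,
    Complex.star_def, Finset.mul_sum, Finset.sum_mul]
  rw [Finset.sum_comm]
  exact Finset.sum_congr rfl fun m _ => Finset.sum_congr rfl fun p _ => by ring

lemma qbm_eq_conj_diagonal {n J : ℕ} {G : Fin J → Mat n} {θ : Fin J → ℝ} {V : Mat n}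
    (hV : V ∈ unitary (Mat n)) {μ : Fin n → ℝ}
    (hG : Gm G θ = V * diagonal (fun k => (μ k : ℂ)) * star V) :
    qbm G θ = V * diagonal (fun k => (lamd μ k : ℂ)) * star V := by
  have hexp : NormedSpace.exp (-(Gm G θ))
      = V * diagonal (fun k => (Real.exp (-μ k) : ℂ)) * star V := by
    rw [hG, ← neg_mul, ← mul_neg, exp_conj_of_mem_unitary hV, diagonal_neg, exp_diagonal]
    congr 3
    funext k
    rw [Pi.exp_def, ← Complex.exp_eq_exp_ℂ, Complex.ofReal_exp, Complex.ofReal_neg]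
  have hZ : (Zpf G θ : ℂ) = ∑ m, (Real.exp (-μ m) : ℂ) := by
    rw [Zpf, hexp, trace_conj_of_mem_unitary hV, trace_diagonal, ← Complex.ofReal_sum,
      Complex.ofReal_re]
  rw [qbm, hexp, hZ, ← Matrix.smul_mul, ← Matrix.mul_smul, ← diagonal_smul]
  congr 3
  funext k
  simp [lamd, div_eq_inv_mul]


section Evolution

variable {n K : ℕ}

lemma isHermitian_Hm {H : Fin K → Mat n} (hH : ∀ k, (H k).IsHermitian) (φ : Fin K → ℝ) :
    (Hm H φ).IsHermitian :=
  isSelfAdjoint_sum _ fun k _ => (hH k).smul (Complex.conj_ofReal (φ k))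

lemma uH_mul_uH' (H : Fin K → Mat n) (φ : Fin K → ℝ) : uH H φ * uH' H φ = 1 := by
  rw [uH, uH', ← neg_smul, ← exp_smul_add_smul, neg_add_cancel, zero_smul, NormedSpace.exp_zero]

lemma uH'_mul_uH (H : Fin K → Mat n) (φ : Fin K → ℝ) : uH' H φ * uH H φ = 1 := by
  rw [uH, uH', ← neg_smul, ← exp_smul_add_smul, add_neg_cancel, zero_smul, NormedSpace.exp_zero]

lemma star_uH {H : Fin K → Mat n} (hH : ∀ k, (H k).IsHermitian) (φ : Fin K → ℝ) :
    star (uH H φ) = uH' H φ := by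
  rw [uH, uH', star_eq_conjTranspose, ← Matrix.exp_conjTranspose, conjTranspose_neg,
    conjTranspose_smul, (isHermitian_Hm hH φ).eq, Complex.star_def, Complex.conj_I, neg_smul,
    neg_neg]

lemma uH_mem_unitary {H : Fin K → Mat n} (hH : ∀ k, (H k).IsHermitian) (φ : Fin K → ℝ) :
    uH H φ ∈ unitary (Mat n) :=
  Unitary.mem_iff.mpr ⟨by rw [star_uH hH, uH'_mul_uH], by rw [star_uH hH, uH_mul_uH']⟩

lemma uH'_mul_chanΨ_mul_uH (H : Fin K → Mat n) (φ : Fin K → ℝ) (X : Mat n) :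
    uH' H φ * chanΨ H φ X * uH H φ = chanΨdag H φ X := by
  have hshift : ∀ t : ℝ,
      uH' H φ * (NormedSpace.exp ((-(Complex.I * t)) • Hm H φ) * X *
        NormedSpace.exp ((Complex.I * t) • Hm H φ)) * uH H φ
      = NormedSpace.exp ((Complex.I * ↑(1 - t)) • Hm H φ) * X *
        NormedSpace.exp ((-(Complex.I * ↑(1 - t))) • Hm H φ) := by
    intro t
    rw [uH, uH', ← neg_smul, ← Matrix.mul_assoc, ← Matrix.mul_assoc, ← exp_smul_add_smul,
      Matrix.mul_assoc, ← exp_smul_add_smul]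
    push_cast
    ring_nf
  have hcont : Continuous fun t : ℝ => NormedSpace.exp ((-(Complex.I * t)) • Hm H φ) * X *
      NormedSpace.exp ((Complex.I * t) • Hm H φ) := by
    simp_rw [← neg_mul]
    exact ((continuous_exp_mul_ofReal_smul _ _).mul continuous_const).mul
      (continuous_exp_mul_ofReal_smul _ _)
  rw [chanΨ, mul_intervalIntegral_mul _ _ hcont,
    intervalIntegral.integral_congr fun t _ => hshift t, intervalIntegral.integral_comp_sub_left
      (fun s : ℝ => NormedSpace.exp ((Complex.I * s) • Hm H φ) * X *
        NormedSpace.exp ((-(Complex.I * s)) • Hm H φ))]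
  norm_num [chanΨdag]

lemma star_uH_mul_Pφ_mul_uH {J : ℕ} (G : Fin J → Mat n) {H : Fin K → Mat n}
    (hH : ∀ k, (H k).IsHermitian) (θ : Fin J → ℝ) (φ : Fin K → ℝ) (k : Fin K) :
    star (uH H φ) * Pφ G H θ φ k * uH H φ
      = Complex.I • (qbm G θ * chanΨdag H φ (H k) - chanΨdag H φ (H k) * qbm G θ) := by
  rw [Pφ, star_mul_smul_commutator_mul (uH_mem_unitary hH φ), eqbm, ← star_uH hH,
    star_mul_conj_mul (uH_mem_unitary hH φ), star_uH hH, uH'_mul_chanΨ_mul_uH]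

end Evolution

theorem stmt17_general {n J K : ℕ}
    (G : Fin J → Mat n) (H : Fin K → Mat n)
    (hH : ∀ k, (H k).IsHermitian)
    (θ : Fin J → ℝ) (φ : Fin K → ℝ)
    (u : Fin n → Fin n → ℂ) (μ : Fin n → ℝ)
    (hortho : ∀ k l, dotc (u k) (u l) = if k = l then 1 else 0)
    (heig : ∀ k, (Gm G θ).mulVec (u k) = (μ k : ℂ) • u k)
    (i j : Fin K) :
    ∑ k, ∑ l, ((cKM (lamd μ k) (lamd μ l) : ℝ) : ℂ) *
        dotc ((uH H φ).mulVec (u k)) ((Pφ G H θ φ i).mulVec ((uH H φ).mulVec (u l))) *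
        dotc ((uH H φ).mulVec (u l)) ((Pφ G H θ φ j).mulVec ((uH H φ).mulVec (u k)))
      = Matrix.trace
          (((chanΨdag H φ (H j) * Gm G θ - Gm G θ * chanΨdag H φ (H j)) * chanΨdag H φ (H i)
            - chanΨdag H φ (H i) *
              (chanΨdag H φ (H j) * Gm G θ - Gm G θ * chanΨdag H φ (H j))) * qbm G θ) := by
  set V : Mat n := (of u)ᵀ
  have hV : V ∈ unitary (Mat n) := of_transpose_mem_unitary hortho
  have hG := eq_conj_diagonal_of_mulVec_eq hV heig
  have hρ := qbm_eq_conj_diagonal hV hG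
  set Λ : Mat n := diagonal fun m => (lamd μ m : ℂ)
  set A : Fin K → Mat n := fun k => star V * chanΨdag H φ (H k) * V
  have hP : ∀ i' k l, dotc (uH H φ *ᵥ u k) (Pφ G H θ φ i' *ᵥ (uH H φ *ᵥ u l))
      = (Complex.I • (Λ * A i' - A i' * Λ)) k l := by
    intro i' k l
    rw [dotc_mulVec_mulVec, dotc_mulVec_eq_conj_apply, star_uH_mul_Pφ_mul_uH G hH,
      star_mul_smul_commutator_mul hV, hρ, star_mul_conj_mul hV]
  simp only [hP]
  rw [← trace_conj_of_mem_unitary (Unitary.star_mem hV), star_star]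
  simp only [← Unitary.conjStarAlgAut_star_apply (S := ℂ) ⟨V, hV⟩, map_mul, map_sub]
  simp only [Unitary.conjStarAlgAut_star_apply]
  rw [hG, hρ, star_mul_conj_mul hV, star_mul_conj_mul hV]
  refine sum_mul_commutator_diagonal_eq_trace _ _ _ (fun k l => ?_) _ _
  exact_mod_cast cKM_lamd_mul_sub_sq μ k l

/-- Kubo–Mori information matrix elements of the evolved quantum Boltzmann machine with
respect to the `φ` parameters:
`I^KM_{ij}(φ) = ⟨[[Ψ_φ†(H_j),G(θ)],Ψ_φ†(H_i)]⟩_{ρ(θ)}`. -/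
theorem stmt17 {n J K : ℕ} (hn : 1 ≤ n) (hJ : 1 ≤ J) (hK : 1 ≤ K)
    (G : Fin J → Mat n) (H : Fin K → Mat n)
    (hG : ∀ j, (G j).IsHermitian) (hH : ∀ k, (H k).IsHermitian)
    (θ : Fin J → ℝ) (φ : Fin K → ℝ)
    (u : Fin n → Fin n → ℂ) (μ : Fin n → ℝ)
    (hortho : ∀ k l, dotc (u k) (u l) = if k = l then 1 else 0)
    (heig : ∀ k, (Gm G θ).mulVec (u k) = (μ k : ℂ) • u k)
    (i j : Fin K) :
    ∑ k, ∑ l, ((cKM (lamd μ k) (lamd μ l) : ℝ) : ℂ) *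
        dotc ((uH H φ).mulVec (u k)) ((Pφ G H θ φ i).mulVec ((uH H φ).mulVec (u l))) *
        dotc ((uH H φ).mulVec (u l)) ((Pφ G H θ φ j).mulVec ((uH H φ).mulVec (u k)))
      = Matrix.trace
          (((chanΨdag H φ (H j) * Gm G θ - Gm G θ * chanΨdag H φ (H j)) * chanΨdag H φ (H i)
            - chanΨdag H φ (H i) *
              (chanΨdag H φ (H j) * Gm G θ - Gm G θ * chanΨdag H φ (H j))) * qbm G θ) :=
  stmt17_general G H hH θ φ u μ hortho heig i j
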